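/- Let (v_1,…,v_N,d) be a weight system and let R ⊆ (ℤ_{≥0}^N)_d be any subset. Then R satisfies condition (C1) if and only if R satisfies condition (C1)', i.e. it suffices to verify (C1) for the nonempty subsets J ⊆ I with |J| ≤ (N+1)/2. -/

import Mathlib

open MvPolynomial

/-- The `k`-th standard basis vector `e_k` of `ℤ_{≥0}^N`. -/
def stdBasisVec {N : ℕ} (k : Fin N) : Fin N → ℕ := fun i => if i = k then 1 else 0

/-- The slice `(ℤ_{≥0}^N)_k` of the lattice, with respect to the weights `v`. -/
def latAt {N : ℕ} (v : Fin N → ℕ) (k : ℕ) : Set (Fin N → ℕ) := {α | ∑ i, α i * v i = k}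

/-- `ℤ_{≥0}^J`, the lattice points supported in `J`. -/
def cubeJ {N : ℕ} (J : Finset (Fin N)) : Set (Fin N → ℕ) := {α | ∀ i, i ∉ J → α i = 0}

/-- The set `R_k = {α ∈ (ℤ_{≥0}^N)_{d-v_k} | α + e_k ∈ R}`. -/
def shiftR {N : ℕ} (v : Fin N → ℕ) (d : ℕ) (R : Set (Fin N → ℕ)) (k : Fin N) :
    Set (Fin N → ℕ) :=
  {α | α ∈ latAt v (d - v k) ∧ α + stdBasisVec k ∈ R}

/-- Condition (C1). -/
def CondC1 {N : ℕ} (v : Fin N → ℕ) (d : ℕ) (R : Set (Fin N → ℕ)) : Prop :=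
  ∀ J : Finset (Fin N), J.Nonempty →
    (R ∩ cubeJ J).Nonempty ∨
      ∃ K : Finset (Fin N), K ⊆ Jᶜ ∧ K.card = J.card ∧
        ∀ k ∈ K, (shiftR v d R k ∩ cubeJ J).Nonempty

/-- Condition (C2). -/
def CondC2 {N : ℕ} (v : Fin N → ℕ) (d : ℕ) (R : Set (Fin N → ℕ)) : Prop :=
  ∀ J : Finset (Fin N), J.Nonempty →
    ∃ K : Finset (Fin N), K.card = J.card ∧
      ∀ k ∈ K, (shiftR v d R k ∩ cubeJ J).Nonempty

/-- Condition (C1)': condition (C1) restricted to the subsets `J` with `|J| ≤ (N+1)/2`. -/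
def CondC1' {N : ℕ} (v : Fin N → ℕ) (d : ℕ) (R : Set (Fin N → ℕ)) : Prop :=
  ∀ J : Finset (Fin N), J.Nonempty → 2 * J.card ≤ N + 1 →
    (R ∩ cubeJ J).Nonempty ∨
      ∃ K : Finset (Fin N), K ⊆ Jᶜ ∧ K.card = J.card ∧
        ∀ k ∈ K, (shiftR v d R k ∩ cubeJ J).Nonempty

/-! If `|J| > (N+1)/2`, pick `J₀ ⊆ J` with `|J₀| = N - |J| + 1 ≤ (N+1)/2`. Alternative (a) for `J₀`
gives (a) for `J`. Under alternative (b), `K ⊆ I ∖ J₀` has `|K| = |J₀| > |I ∖ J|`, so some `k ∈ K`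
lies in `J`, and `α + e_k` with `α ∈ R_k ∩ ℤ_{≥0}^{J₀}` is a point of `R ∩ ℤ_{≥0}^J`. -/

theorem cubeJ_mono {N : ℕ} {J₀ J : Finset (Fin N)} (h : J₀ ⊆ J) : cubeJ J₀ ⊆ cubeJ J :=
  fun _ hα i hi => hα i fun hi₀ => hi (h hi₀)

theorem add_stdBasisVec_mem_cubeJ {N : ℕ} {J : Finset (Fin N)} {α : Fin N → ℕ} {k : Fin N}
    (hα : α ∈ cubeJ J) (hk : k ∈ J) : α + stdBasisVec k ∈ cubeJ J := by
  intro i hi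
  have hik : i ≠ k := fun h => hi (h ▸ hk)
  simp [stdBasisVec, hα i hi, hik]

theorem nonempty_inter_cubeJ_of_shiftR {N : ℕ} {v : Fin N → ℕ} {d : ℕ} {R : Set (Fin N → ℕ)}
    {J : Finset (Fin N)} {k : Fin N} (hk : k ∈ J) (h : (shiftR v d R k ∩ cubeJ J).Nonempty) :
    (R ∩ cubeJ J).Nonempty := by
  obtain ⟨α, ⟨-, hαR⟩, hαJ⟩ := h
  exact ⟨α + stdBasisVec k, hαR, add_stdBasisVec_mem_cubeJ hαJ hk⟩

theorem nonempty_inter_cubeJ_of_subset {N : ℕ} {v : Fin N → ℕ} {d : ℕ} {R : Set (Fin N → ℕ)}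
    {J₀ J : Finset (Fin N)} (hsub : J₀ ⊆ J) (hcard : N < J.card + J₀.card)
    (h : (R ∩ cubeJ J₀).Nonempty ∨
      ∃ K : Finset (Fin N), K ⊆ J₀ᶜ ∧ K.card = J₀.card ∧
        ∀ k ∈ K, (shiftR v d R k ∩ cubeJ J₀).Nonempty) :
    (R ∩ cubeJ J).Nonempty := by
  rcases h with hR | ⟨K, -, hKcard, hK⟩
  · exact hR.mono (Set.inter_subset_inter_right R (cubeJ_mono hsub))
  · have hKJ : (K ∩ J).Nonempty :=
      Finset.inter_nonempty_of_card_lt_card_add_card (Finset.subset_univ K)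
        (Finset.subset_univ J) (by simp only [Finset.card_univ, Fintype.card_fin]; omega)
    obtain ⟨k, hk⟩ := hKJ
    obtain ⟨hkK, hkJ⟩ := Finset.mem_inter.mp hk
    exact nonempty_inter_cubeJ_of_shiftR hkJ ((hK k hkK).mono
      (Set.inter_subset_inter_right _ (cubeJ_mono hsub)))

theorem condC1_iff_condC1'_general (N : ℕ) (v : Fin N → ℕ) (d : ℕ)
    (R : Set (Fin N → ℕ)) :
    CondC1 v d R ↔ CondC1' v d R := by
  refine ⟨fun h J hJ _ => h J hJ, fun h J hJ => ?_⟩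
  by_cases hsmall : 2 * J.card ≤ N + 1
  · exact h J hJ hsmall
  have hJN : J.card ≤ N := by simpa using Finset.card_le_univ J
  obtain ⟨J₀, hJ₀J, hJ₀card⟩ := 
    Finset.exists_subset_card_eq (s := J) (n := N - J.card + 1) (by omega)
  have hJ₀ : J₀.Nonempty := Finset.card_pos.mp (by omega)
  exact Or.inl (nonempty_inter_cubeJ_of_subset hJ₀J (by omega) (h J₀ hJ₀ (by omega)))

/-- Lemma 2.1 of Hertling–Kurbel: conditions (C1) and (C1)' are equivalent
for any subset `R ⊆ (ℤ_{≥0}^N)_d` and any weight system `(v_1,…,v_N,d)`. -/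
theorem condC1_iff_condC1' (N : ℕ) (hN : 1 ≤ N) (v : Fin N → ℕ) (d : ℕ)
    (hv : ∀ i, 0 < v i) (hvd : ∀ i, v i < d)
    (R : Set (Fin N → ℕ)) (hR : R ⊆ latAt v d) :
    CondC1 v d R ↔ CondC1' v d R :=
  condC1_iff_condC1'_general N v d R
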